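/- Let β > 1 and let (ζ_t)_{t≥0} be a spectrally positive β-stable Lévy process (no negative jumps) normalized so that its subordinator of first passage times τ_{-s} = inf{t : ζ_t = -s} is a stable subordinator of index 1/β. Then for all a, b > 0, E[τ_{-a} / τ_{-(a+b)}] = a/(a+b). -/

import Mathlib

open MeasureTheory ProbabilityTheory Filter Set

/-- A process `T` (here `T s` plays the role of the first passage time `τ_{-s}`) has
stationary, independent increments. -/
def StationaryIndepIncrements {Ω : Type*} [MeasurableSpace Ω] (P : Measure Ω)
    (T : ℝ → Ω → ℝ) : Prop :=
  (∀ (n : ℕ) (t : ℕ → ℝ), Monotone t → (∀ i, 0 ≤ t i) →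
      iIndepFun
        (fun i : Fin n => fun ω => T (t (i.1 + 1)) ω - T (t i.1) ω) P) ∧
  (∀ s t : ℝ, 0 ≤ s → s ≤ t →
      Measure.map (fun ω => T t ω - T s ω) P = Measure.map (fun ω => T (t - s) ω) P)

/-!
Fix `t > 0` and let `g s = E[T s / T t]` for `0 ≤ s ≤ t`. By independence and stationarity of
the increments, the pair `(T (u + v) - T u, T t - (T (u + v) - T u))` has the same law as
`(T v, T t - T v)`; the ratio being a function of that pair, `g (u + v) = g u + g v`. An
additive function that is monotone on `[0, t]` is linear there, and `g t = 1`.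
-/

open Topology

section AdditiveOnInterval

variable {g : ℝ → ℝ} {L : ℝ}

lemma apply_natCast_mul_of_add_on
    (hadd : ∀ u v, 0 ≤ u → 0 ≤ v → u + v ≤ L → g (u + v) = g u + g v) {c : ℝ} (hc : 0 ≤ c) :
    ∀ n : ℕ, n * c ≤ L → g (n * c) = n * g c
  | 0, h => by
    have := hadd 0 0 le_rfl le_rfl (by simpa using h)
    simp only [add_zero] at this
    simp only [Nat.cast_zero, zero_mul]
    linarith
  | n + 1, h => by
    push_cast at h ⊢
    rw [add_one_mul, hadd _ _ (by positivity) hc (by linarith),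
      apply_natCast_mul_of_add_on hadd hc n (by nlinarith)]
    ring

lemma le_apply_of_monotoneOn_of_add_on (hL : 0 < L) (hmono : MonotoneOn g (Icc 0 L))
    (hadd : ∀ u v, 0 ≤ u → 0 ≤ v → u + v ≤ L → g (u + v) = g u + g v)
    {x : ℝ} (hx : x ∈ Icc 0 L) {n : ℕ} (hn : 0 < n) :
    (x / L - 1 / n) * g L ≤ g x := by
  have hn' : (0 : ℝ) < n := by exact_mod_cast hn
  set c := L / n with hc_def
  have hc : 0 < c := by positivity
  set m := ⌊x / c⌋₊
  have hmc : m * c ≤ x := (le_div_iff₀ hc).1 (Nat.floor_le (div_nonneg hx.1 hc.le))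
  have hnc : n * c = L := by rw [hc_def]; field_simp
  have hgL : g L = n * g c := by
    rw [← hnc, apply_natCast_mul_of_add_on hadd hc.le n hnc.le]
  have hg0 : g 0 = 0 := by
    simpa using apply_natCast_mul_of_add_on hadd hc.le 0 (by simpa using hL.le)
  have hgc : 0 ≤ g c :=
    hg0 ▸ hmono ⟨le_rfl, hL.le⟩ ⟨hc.le, hnc ▸ le_mul_of_one_le_left hc.le (by exact_mod_cast hn)⟩
      hc.le
  calc (x / L - 1 / n) * g L = (x / c - 1) * g c := by
        rw [hgL, ← hnc]; field_simp
    _ ≤ m * g c := by gcongr; linarith [Nat.lt_floor_add_one (x / c)]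
    _ = g (m * c) := (apply_natCast_mul_of_add_on hadd hc.le m (hmc.trans hx.2)).symm
    _ ≤ g x := hmono ⟨by positivity, hmc.trans hx.2⟩ hx hmc

theorem eq_div_mul_of_monotoneOn_of_add_on (hL : 0 < L) (hmono : MonotoneOn g (Icc 0 L))
    (hadd : ∀ u v, 0 ≤ u → 0 ≤ v → u + v ≤ L → g (u + v) = g u + g v)
    {x : ℝ} (hx : x ∈ Icc 0 L) :
    g x = x / L * g L := by
  have hlower (n : ℕ) (hn : 0 < n) : (x / L - 1 / n) * g L ≤ g x :=
    le_apply_of_monotoneOn_of_add_on hL hmono hadd hx hn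
  have hupper (n : ℕ) (hn : 0 < n) : g x ≤ (x / L + 1 / n) * g L := by
    have hcompl := le_apply_of_monotoneOn_of_add_on hL hmono hadd
      (x := L - x) ⟨by linarith [hx.2], by linarith [hx.1]⟩ hn
    have hsplit : g L = g x + g (L - x) := by
      simpa using hadd x (L - x) hx.1 (by linarith [hx.2]) (by linarith)
    rw [sub_div, div_self hL.ne'] at hcompl
    linarith
  have hinv : Tendsto (fun n : ℕ => 1 / (n : ℝ)) atTop (𝓝 0) :=
    tendsto_one_div_atTop_nhds_zero_nat
  refine le_antisymm (ge_of_tendsto ?_ ((eventually_gt_atTop 0).mono hupper))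
    (le_of_tendsto ?_ ((eventually_gt_atTop 0).mono hlower))
  · simpa using (hinv.const_add (x / L)).mul_const (g L)
  · simpa using (hinv.const_sub (x / L)).mul_const (g L)

end AdditiveOnInterval

section Ratios

variable {Ω : Type*} [MeasurableSpace Ω] {P : Measure Ω} {T : ℝ → Ω → ℝ}

lemma integrable_div_of_le [IsFiniteMeasure P] (hmeas : ∀ s, Measurable (T s))
    (h0 : ∀ᵐ ω ∂P, T 0 ω = 0) (hmono : ∀ s t : ℝ, 0 ≤ s → s ≤ t → ∀ᵐ ω ∂P, T s ω ≤ T t ω)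
    {s t : ℝ} (hs : 0 ≤ s) (hst : s ≤ t) : Integrable (fun ω => T s ω / T t ω) P := by
  refine (integrable_const 1).mono' ((hmeas s).div (hmeas t)).aestronglyMeasurable ?_
  filter_upwards [h0, hmono 0 s le_rfl hs, hmono s t hs hst] with ω h0ω h0s hstω
  have hTs : 0 ≤ T s ω := h0ω ▸ h0s
  rw [Real.norm_of_nonneg (div_nonneg hTs (hTs.trans hstω))]
  exact div_le_one_of_le₀ hstω (hTs.trans hstω)

lemma monotoneOn_integral_div [IsFiniteMeasure P] (hmeas : ∀ s, Measurable (T s))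
    (h0 : ∀ᵐ ω ∂P, T 0 ω = 0) (hmono : ∀ s t : ℝ, 0 ≤ s → s ≤ t → ∀ᵐ ω ∂P, T s ω ≤ T t ω)
    (t : ℝ) : MonotoneOn (fun s => ∫ ω, T s ω / T t ω ∂P) (Icc 0 t) := by
  intro u hu v hv huv
  refine integral_mono_ae (integrable_div_of_le hmeas h0 hmono hu.1 hu.2)
    (integrable_div_of_le hmeas h0 hmono hv.1 hv.2) ?_
  filter_upwards [h0, hmono 0 t le_rfl (hu.1.trans hu.2), hmono u v hu.1 huv] with ω h0ω h0t huvω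
  exact div_le_div_of_nonneg_right huvω (h0ω ▸ h0t)

end Ratios

namespace StationaryIndepIncrements

variable {Ω : Type*} [MeasurableSpace Ω] {P : Measure Ω} {T : ℝ → Ω → ℝ}

lemma identDistrib_sub (hSI : StationaryIndepIncrements P T) (hmeas : ∀ s, Measurable (T s))
    {s t : ℝ} (hs : 0 ≤ s) (hst : s ≤ t) : IdentDistrib (T t - T s) (T (t - s)) P P :=
  ⟨((hmeas t).sub (hmeas s)).aemeasurable, (hmeas _).aemeasurable, hSI.2 s t hs hst⟩

lemma iIndepFun_sub (hSI : StationaryIndepIncrements P T) {n : ℕ} {t : Fin (n + 1) → ℝ}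
    (ht : Monotone t) (ht0 : 0 ≤ t 0) :
    iIndepFun (fun i : Fin n => T (t i.succ) - T (t i.castSucc)) P := by
  have := hSI.1 n (fun k => t ⟨min k n, by omega⟩)
    (fun k l hkl => ht (by simp only [Fin.mk_le_mk]; omega))
    (fun k => ht0.trans (ht (Fin.zero_le _)))
  convert this using 3 with i
  simp only [Pi.sub_apply]
  congr 3 <;> simp only [Fin.ext_iff, Fin.val_succ, Fin.val_castSucc] <;> omega

lemma iIndepFun_sub_four (hSI : StationaryIndepIncrements P T) {q r s t : ℝ} (hq : 0 ≤ q)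
    (hqr : q ≤ r) (hrs : r ≤ s) (hst : s ≤ t) :
    iIndepFun ![T r - T q, T s - T r, T t - T s] P := by
  have := hSI.iIndepFun_sub (t := ![q, r, s, t])
    (Fin.monotone_iff_le_succ.2 fun i => by fin_cases i <;> simpa) hq
  convert this using 1
  funext i
  fin_cases i <;> rfl

lemma indepFun_sub (hSI : StationaryIndepIncrements P T) {q r s t : ℝ} (hq : 0 ≤ q)
    (hqr : q ≤ r) (hrs : r ≤ s) (hst : s ≤ t) : IndepFun (T r - T q) (T t - T s) P :=
  (hSI.iIndepFun_sub_four hq hqr hrs hst).indepFun (i := 0) (j := 2) (by decide)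

lemma indepFun_sub_add_sub (hSI : StationaryIndepIncrements P T) (hmeas : ∀ s, Measurable (T s))
    {q r s t : ℝ} (hq : 0 ≤ q) (hqr : q ≤ r) (hrs : r ≤ s) (hst : s ≤ t) :
    IndepFun (T s - T r) ((T r - T q) + (T t - T s)) P := by
  have hmeas' (i : Fin 3) : Measurable (![T r - T q, T s - T r, T t - T s] i) := by
    fin_cases i <;> exact (hmeas _).sub (hmeas _)
  exact (hSI.iIndepFun_sub_four hq hqr hrs hst).indepFun_add_right hmeas' 1 0 2
    (by decide) (by decide)

variable [IsFiniteMeasure P]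

lemma identDistrib_add_sub (hSI : StationaryIndepIncrements P T) (hmeas : ∀ s, Measurable (T s))
    {u s t : ℝ} (hu : 0 ≤ u) (hus : u ≤ s) (hst : s ≤ t) :
    IdentDistrib ((T u - T 0) + (T t - T s)) (T (u + (t - s))) P P := by
  have hlaw : IdentDistrib (T t - T s) (T (u + (t - s)) - T u) P P := by
    have h := hSI.identDistrib_sub hmeas hu (le_add_of_nonneg_right (sub_nonneg.2 hst))
    rw [add_sub_cancel_left] at h
    exact (hSI.identDistrib_sub hmeas (hu.trans hus) hst).trans h.symm
  have hx : u ≤ u + (t - s) := le_add_of_nonneg_right (sub_nonneg.2 hst)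
  have hpair := (IdentDistrib.refl ((hmeas u).sub (hmeas 0)).aemeasurable).prodMk hlaw
    (hSI.indepFun_sub le_rfl hu hus hst) (hSI.indepFun_sub le_rfl hu le_rfl hx)
  have hcollapse : ((fun p : ℝ × ℝ => p.1 + p.2) ∘
      fun ω => ((T u - T 0) ω, (T (u + (t - s)) - T u) ω)) = T (u + (t - s)) - T 0 := by
    funext ω
    simp
  have hsum := hpair.comp measurable_add
  rw [hcollapse] at hsum
  have := hsum.trans (hSI.identDistrib_sub hmeas le_rfl (hu.trans hx))
  rwa [sub_zero] at this

lemma integral_sub_div_eq (hSI : StationaryIndepIncrements P T) (hmeas : ∀ s, Measurable (T s))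
    (h0 : ∀ᵐ ω ∂P, T 0 ω = 0) {r s t : ℝ} (hr : 0 ≤ r) (hrs : r ≤ s) (hst : s ≤ t) :
    ∫ ω, (T s ω - T r ω) / T t ω ∂P = ∫ ω, T (s - r) ω / T t ω ∂P := by
  have hsr : 0 ≤ s - r := sub_nonneg.2 hrs
  have hsrt : s - r ≤ t := by linarith
  have hrest : IdentDistrib ((T r - T 0) + (T t - T s)) (T t - T (s - r)) P P := by
    have h := hSI.identDistrib_add_sub hmeas hr hrs hst
    rw [show r + (t - s) = t - (s - r) by ring] at h
    exact h.trans (hSI.identDistrib_sub hmeas hsr hsrt).symm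
  have hfirst : IdentDistrib (T s - T r) (T (s - r) - T 0) P P := by
    have h := (hSI.identDistrib_sub hmeas le_rfl hsr).symm
    rw [sub_zero] at h
    exact (hSI.identDistrib_sub hmeas hr hrs).trans h
  have hpair := hfirst.prodMk hrest
    (hSI.indepFun_sub_add_sub hmeas le_rfl hr hrs hst)
    (hSI.indepFun_sub le_rfl hsr le_rfl hsrt)
  have hratio := (hpair.comp (measurable_fst.div (measurable_fst.add measurable_snd))).integral_eq
  calc ∫ ω, (T s ω - T r ω) / T t ω ∂P
      = ∫ ω, (T s ω - T r ω) / ((T s ω - T r ω) + ((T r ω - T 0 ω) + (T t ω - T s ω))) ∂P :=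
        integral_congr_ae (h0.mono fun ω h => by simp only [h]; ring_nf)
    _ = ∫ ω, (T (s - r) ω - T 0 ω) / ((T (s - r) ω - T 0 ω) + (T t ω - T (s - r) ω)) ∂P := hratio
    _ = ∫ ω, T (s - r) ω / T t ω ∂P :=
        integral_congr_ae (h0.mono fun ω h => by simp only [h]; ring_nf)

lemma integral_add_div (hSI : StationaryIndepIncrements P T) (hmeas : ∀ s, Measurable (T s))
    (h0 : ∀ᵐ ω ∂P, T 0 ω = 0) (hmono : ∀ s t : ℝ, 0 ≤ s → s ≤ t → ∀ᵐ ω ∂P, T s ω ≤ T t ω)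
    {u v t : ℝ} (hu : 0 ≤ u) (hv : 0 ≤ v) (huvt : u + v ≤ t) :
    ∫ ω, T (u + v) ω / T t ω ∂P = ∫ ω, T u ω / T t ω ∂P + ∫ ω, T v ω / T t ω ∂P := by
  have hincr := hSI.integral_sub_div_eq hmeas h0 hu (le_add_of_nonneg_right hv) huvt
  rw [add_sub_cancel_left] at hincr
  have hsplit : ∫ ω, (T (u + v) ω - T u ω) / T t ω ∂P
      = ∫ ω, T (u + v) ω / T t ω ∂P - ∫ ω, T u ω / T t ω ∂P := by
    rw [← integral_sub (integrable_div_of_le hmeas h0 hmono (by positivity) huvt)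
      (integrable_div_of_le hmeas h0 hmono hu (by linarith))]
    simp_rw [sub_div]
  linarith

end StationaryIndepIncrements

theorem subordinator_passage_time_ratio_general
    {Ω : Type*} [MeasurableSpace Ω] (P : Measure Ω) [IsProbabilityMeasure P]
    (T : ℝ → Ω → ℝ)
    (hmeas : ∀ s, Measurable (T s))
    (h0 : ∀ᵐ ω ∂P, T 0 ω = 0)
    (hpos : ∀ s, 0 < s → ∀ᵐ ω ∂P, 0 < T s ω)
    (hmono : ∀ s t : ℝ, 0 ≤ s → s ≤ t → ∀ᵐ ω ∂P, T s ω ≤ T t ω)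
    (hSI : StationaryIndepIncrements P T)
    (a b : ℝ) (ha : 0 < a) (hb : 0 < b) :
    ∫ ω, T a ω / T (a + b) ω ∂P = a / (a + b) := by
  have hab : 0 < a + b := by linarith
  have hone : ∫ ω, T (a + b) ω / T (a + b) ω ∂P = 1 := by
    rw [integral_congr_ae ((hpos _ hab).mono fun ω h => div_self h.ne')]
    simp
  have hlin := eq_div_mul_of_monotoneOn_of_add_on hab (monotoneOn_integral_div hmeas h0 hmono _)
    (fun u v hu hv huv => hSI.integral_add_div hmeas h0 hmono hu hv huv) ⟨ha.le, by linarith⟩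
  simpa only [hone, mul_one] using hlin

/-- Let `β > 1` and let `(ζ_t)` be a spectrally positive `β`-stable Lévy
process, normalized so that its first passage times `T s = τ_{-s} = inf {t : ζ_t = -s}`
form a stable subordinator of index `1/β` (encoded here by the hypotheses that
`s ↦ T s` starts at `0`, is nonnegative and nondecreasing, has stationary independent
increments, and has Laplace transform `E[exp (-l * T s)] = exp (-(s * l^(1/β)))`).
Then for all `a, b > 0`, `E[T a / T (a + b)] = a / (a + b)`. -/
theorem subordinator_passage_time_ratio
    {Ω : Type*} [MeasurableSpace Ω] (P : Measure Ω) [IsProbabilityMeasure P]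
    (β : ℝ) (hβ : 1 < β)
    (T : ℝ → Ω → ℝ)
    (hmeas : ∀ s, Measurable (T s))
    (h0 : ∀ᵐ ω ∂P, T 0 ω = 0)
    (hpos : ∀ s, 0 < s → ∀ᵐ ω ∂P, 0 < T s ω)
    (hmono : ∀ s t : ℝ, 0 ≤ s → s ≤ t → ∀ᵐ ω ∂P, T s ω ≤ T t ω)
    (hSI : StationaryIndepIncrements P T)
    (hLap : ∀ l s : ℝ, 0 < l → 0 < s →
      ∫ ω, Real.exp (-(l * T s ω)) ∂P = Real.exp (-(s * l ^ (1 / β))))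
    (a b : ℝ) (ha : 0 < a) (hb : 0 < b) :
    ∫ ω, T a ω / T (a + b) ω ∂P = a / (a + b) :=
  subordinator_passage_time_ratio_general P T hmeas h0 hpos hmono hSI a b ha hb
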